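/- The space ΛBV^{(p)} of functions of bounded p-Λ-variation on [0,1], equipped with the norm ‖f‖ = |f(0)| + V(f), is a Banach space. -/

import Mathlib

/-!
Testing the variation on the single interval `[0, x]` gives
`|f x| ≤ (1 + λ₀^{1/p}) ‖f‖` on `[0,1]`, so a Cauchy sequence `fₙ` converges pointwise to some `g`.
Every variation sum of `fₙ - g` is the limit, as `m → ∞`, of the same sum for `fₙ - fₘ`, hence
`‖fₙ - g‖ ≤ sup_{m ≥ N} ‖fₙ - fₘ‖` is small. Finally `g = f_N - (f_N - g)` lies in the class since the
variation is subadditive, by Minkowski's inequality with weights `1/λᵢ`.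
-/

open MeasureTheory

/-- The set of candidate sums defining the p-Λ-variation of `f` on `[0,1]`:
values `(∑ᵢ |f(bᵢ) - f(aᵢ)|^p / λᵢ)^{1/p}` over finite families of
nonoverlapping subintervals `[aᵢ, bᵢ] ⊆ [0,1]`. -/
def varSet (p : ℝ) (Λ : ℕ → ℝ) (f : ℝ → ℝ) : Set ℝ :=
  {v : ℝ | ∃ (n : ℕ) (a b : Fin n → ℝ),
    (∀ i, 0 ≤ a i ∧ a i ≤ b i ∧ b i ≤ 1) ∧
    (∀ i j, i ≠ j → b i ≤ a j ∨ b j ≤ a i) ∧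
    v = (∑ i, |f (b i) - f (a i)| ^ p / Λ (i : ℕ)) ^ (1 / p)}

/-- The p-Λ-variation `V(f)` of `f` on `[0,1]`. -/
noncomputable def pVar (p : ℝ) (Λ : ℕ → ℝ) (f : ℝ → ℝ) : ℝ :=
  sSup (varSet p Λ f)

/-- `f` belongs to the Waterman–Shiba class `ΛBV^{(p)}` on `[0,1]`. -/
def MemWS (p : ℝ) (Λ : ℕ → ℝ) (f : ℝ → ℝ) : Prop :=
  BddAbove (varSet p Λ f)

open Filter Topology Set

theorem weighted_Lp_add_le {ι : Type*} (s : Finset ι) (u v w : ι → ℝ) {p : ℝ} (hp : 1 ≤ p)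
    (hw : ∀ i ∈ s, 0 < w i) :
    (∑ i ∈ s, |u i + v i| ^ p / w i) ^ (1 / p) ≤
      (∑ i ∈ s, |u i| ^ p / w i) ^ (1 / p) + (∑ i ∈ s, |v i| ^ p / w i) ^ (1 / p) := by
  have hp0 : p ≠ 0 := by positivity
  -- dividing by `w i ^ (1 / p)` turns the weighted sums into plain `ℓ^p` sums
  have rescale : ∀ z : ι → ℝ,
      ∑ i ∈ s, |z i| ^ p / w i = ∑ i ∈ s, |z i / w i ^ (1 / p)| ^ p := by
    intro z
    refine Finset.sum_congr rfl fun i hi => ?_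
    have hwp : 0 < w i ^ (1 / p) := Real.rpow_pos_of_pos (hw i hi) _
    rw [abs_div, abs_of_pos hwp, Real.div_rpow (abs_nonneg _) hwp.le, one_div,
      Real.rpow_inv_rpow (hw i hi).le hp0]
  simp only [rescale, add_div]
  exact Real.Lp_add_le s _ _ hp

noncomputable def wsNorm (p : ℝ) (Λ : ℕ → ℝ) (f : ℝ → ℝ) : ℝ :=
  |f 0| + pVar p Λ f

section

variable {p : ℝ} {Λ : ℕ → ℝ}

theorem varSet_nonempty (f : ℝ → ℝ) : (varSet p Λ f).Nonempty :=
  ⟨_, 0, Fin.elim0, Fin.elim0, fun i => i.elim0, fun i => i.elim0, rfl⟩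

theorem zero_mem_varSet (hp : p ≠ 0) (f : ℝ → ℝ) : (0 : ℝ) ∈ varSet p Λ f :=
  ⟨0, Fin.elim0, Fin.elim0, fun i => i.elim0, fun i => i.elim0, by simp [hp]⟩

theorem pVar_nonneg (hp : p ≠ 0) {f : ℝ → ℝ} (hf : MemWS p Λ f) : 0 ≤ pVar p Λ f :=
  le_csSup hf (zero_mem_varSet hp f)

theorem varSet_neg (f : ℝ → ℝ) : varSet p Λ (fun x => -f x) = varSet p Λ f := by
  have habs : ∀ x y : ℝ, |-x - -y| = |x - y| := fun x y => by rw [neg_sub_neg, abs_sub_comm]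
  simp only [varSet, habs]

theorem exists_le_add_of_mem_varSet_add (hp : 1 ≤ p) (hΛ : ∀ i, 0 < Λ i) {f g : ℝ → ℝ} {v : ℝ}
    (hv : v ∈ varSet p Λ (fun x => f x + g x)) :
    ∃ vf ∈ varSet p Λ f, ∃ vg ∈ varSet p Λ g, v ≤ vf + vg := by
  obtain ⟨n, a, b, hab, hdisj, rfl⟩ := hv
  refine ⟨_, ⟨n, a, b, hab, hdisj, rfl⟩, _, ⟨n, a, b, hab, hdisj, rfl⟩, ?_⟩
  simpa only [add_sub_add_comm] using
    weighted_Lp_add_le Finset.univ (fun i => f (b i) - f (a i)) (fun i => g (b i) - g (a i))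
      (fun i => Λ i) hp fun i _ => hΛ i

theorem MemWS.add (hp : 1 ≤ p) (hΛ : ∀ i, 0 < Λ i) {f g : ℝ → ℝ} (hf : MemWS p Λ f)
    (hg : MemWS p Λ g) : MemWS p Λ (fun x => f x + g x) := by
  obtain ⟨Mf, hMf⟩ := hf
  obtain ⟨Mg, hMg⟩ := hg
  refine ⟨Mf + Mg, fun v hv => ?_⟩
  obtain ⟨vf, hvf, vg, hvg, hle⟩ := exists_le_add_of_mem_varSet_add hp hΛ hv
  exact hle.trans (add_le_add (hMf hvf) (hMg hvg))

theorem MemWS.neg {f : ℝ → ℝ} (hf : MemWS p Λ f) : MemWS p Λ (fun x => -f x) := by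
  rwa [MemWS, varSet_neg]

theorem MemWS.sub (hp : 1 ≤ p) (hΛ : ∀ i, 0 < Λ i) {f g : ℝ → ℝ} (hf : MemWS p Λ f)
    (hg : MemWS p Λ g) : MemWS p Λ (fun x => f x - g x) := by
  simpa only [sub_eq_add_neg] using hf.add hp hΛ hg.neg

theorem abs_sub_apply_zero_le_pVar (hp : p ≠ 0) (hΛ0 : 0 < Λ 0) {f : ℝ → ℝ} (hf : MemWS p Λ f)
    {x : ℝ} (hx : x ∈ Icc (0 : ℝ) 1) : |f x - f 0| ≤ Λ 0 ^ (1 / p) * pVar p Λ f := by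
  -- the single interval `[0, x]` is an admissible family
  have hmem : (|f x - f 0| ^ p / Λ 0) ^ (1 / p) ∈ varSet p Λ f :=
    ⟨1, fun _ => 0, fun _ => x, fun _ => ⟨le_rfl, hx.1, hx.2⟩,
      fun i j hij => absurd (Subsingleton.elim i j) hij, by simp⟩
  calc |f x - f 0| = Λ 0 ^ (1 / p) * (|f x - f 0| ^ p / Λ 0) ^ (1 / p) := by
        rw [← Real.mul_rpow hΛ0.le (by positivity), mul_div_cancel₀ _ hΛ0.ne', one_div,
          Real.rpow_rpow_inv (abs_nonneg _) hp]
    _ ≤ Λ 0 ^ (1 / p) * pVar p Λ f := by gcongr; exact le_csSup hf hmem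

theorem abs_apply_le_mul_wsNorm (hp : p ≠ 0) (hΛ0 : 0 < Λ 0) {f : ℝ → ℝ} (hf : MemWS p Λ f)
    {x : ℝ} (hx : x ∈ Icc (0 : ℝ) 1) : |f x| ≤ (1 + Λ 0 ^ (1 / p)) * wsNorm p Λ f := by
  have hV := pVar_nonneg hp hf
  have hc : 0 ≤ Λ 0 ^ (1 / p) := by positivity
  calc |f x| ≤ |f 0| + |f x - f 0| := by
        linarith [abs_sub_abs_le_abs_sub (f x) (f 0)]
    _ ≤ |f 0| + Λ 0 ^ (1 / p) * pVar p Λ f := by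
        gcongr; exact abs_sub_apply_zero_le_pVar hp hΛ0 hf hx
    _ ≤ (1 + Λ 0 ^ (1 / p)) * (|f 0| + pVar p Λ f) := by nlinarith [abs_nonneg (f 0)]

theorem exists_tendsto_of_mem_varSet (hp : 0 ≤ p) {F : ℕ → ℝ → ℝ} {G : ℝ → ℝ}
    (hFG : ∀ x ∈ Icc (0 : ℝ) 1, Tendsto (fun m => F m x) atTop (𝓝 (G x)))
    {v : ℝ} (hv : v ∈ varSet p Λ G) :
    ∃ u : ℕ → ℝ, (∀ m, u m ∈ varSet p Λ (F m)) ∧ Tendsto u atTop (𝓝 v) := by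
  obtain ⟨n, a, b, hab, hdisj, rfl⟩ := hv
  refine ⟨_, fun m => ⟨n, a, b, hab, hdisj, rfl⟩, ?_⟩
  refine (tendsto_finsetSum _ fun i _ => ?_).rpow_const (Or.inr (by positivity))
  obtain ⟨ha, hab, hb⟩ := hab i
  have hb' := hFG (b i) ⟨ha.trans hab, hb⟩
  have ha' := hFG (a i) ⟨ha, hab.trans hb⟩
  exact ((hb'.sub ha').abs.rpow_const (Or.inr hp)).div_const _

theorem wsNorm_le_of_tendsto (hp : 0 ≤ p) {F : ℕ → ℝ → ℝ} {G : ℝ → ℝ}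
    (hFG : ∀ x ∈ Icc (0 : ℝ) 1, Tendsto (fun m => F m x) atTop (𝓝 (G x))) {C : ℝ}
    (hC : ∀ᶠ m in atTop, MemWS p Λ (F m) ∧ wsNorm p Λ (F m) ≤ C) :
    MemWS p Λ G ∧ wsNorm p Λ G ≤ C := by
  have hbound : ∀ v ∈ varSet p Λ G, |G 0| + v ≤ C := by
    intro v hv
    obtain ⟨u, hu, hlim⟩ := exists_tendsto_of_mem_varSet hp hFG hv
    refine le_of_tendsto ((hFG 0 ⟨le_rfl, zero_le_one⟩).abs.add hlim) ?_
    filter_upwards [hC] with m ⟨hmem, hnorm⟩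
    exact (add_le_add_right (le_csSup hmem (hu m)) _).trans hnorm
  refine ⟨⟨C, fun v hv => by linarith [hbound v hv, abs_nonneg (G 0)]⟩, ?_⟩
  exact le_sub_iff_add_le'.1
    (csSup_le (varSet_nonempty G) fun v hv => le_sub_iff_add_le'.2 (hbound v hv))

theorem cauchySeq_apply_of_wsNorm (hp : p ≠ 0) (hΛ0 : 0 < Λ 0) {f : ℕ → ℝ → ℝ}
    (hf : ∀ m n, MemWS p Λ (fun x => f m x - f n x))
    (hcauchy : ∀ ε : ℝ, 0 < ε → ∃ N : ℕ, ∀ m n : ℕ, N ≤ m → N ≤ n →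
      wsNorm p Λ (fun x => f m x - f n x) < ε)
    {x : ℝ} (hx : x ∈ Icc (0 : ℝ) 1) : CauchySeq (fun n => f n x) := by
  set c := 1 + Λ 0 ^ (1 / p)
  have hc : 0 < c := by positivity
  refine Metric.cauchySeq_iff.2 fun ε hε => ?_
  obtain ⟨N, hN⟩ := hcauchy (ε / c) (by positivity)
  refine ⟨N, fun m hm n hn => ?_⟩
  calc dist (f m x) (f n x) = |f m x - f n x| := Real.dist_eq _ _
    _ ≤ c * wsNorm p Λ (fun x => f m x - f n x) :=
        abs_apply_le_mul_wsNorm (f := fun x => f m x - f n x) hp hΛ0 (hf m n) hx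
    _ < c * (ε / c) := by gcongr; exact hN m n hm hn
    _ = ε := mul_div_cancel₀ _ hc.ne'

end

theorem stmt15_general (p : ℝ) (hp : 1 ≤ p)
    (Λ : ℕ → ℝ) (hΛpos : ∀ i, 0 < Λ i)
    (f : ℕ → ℝ → ℝ) (hf : ∀ n, MemWS p Λ (f n))
    (hcauchy : ∀ ε : ℝ, 0 < ε → ∃ N : ℕ, ∀ m n : ℕ, N ≤ m → N ≤ n →
      |f m 0 - f n 0| + pVar p Λ (fun x => f m x - f n x) < ε) :
    ∃ g : ℝ → ℝ, MemWS p Λ g ∧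
      ∀ ε : ℝ, 0 < ε → ∃ N : ℕ, ∀ n : ℕ, N ≤ n →
        |f n 0 - g 0| + pVar p Λ (fun x => f n x - g x) < ε := by
  have hp0 : 0 < p := by linarith
  have hdiff : ∀ m n, MemWS p Λ (fun x => f m x - f n x) := fun m n =>
    (hf m).sub hp hΛpos (hf n)
  set g : ℝ → ℝ := fun x => limUnder atTop fun n => f n x
  have hfg : ∀ x ∈ Icc (0 : ℝ) 1, Tendsto (fun n => f n x) atTop (𝓝 (g x)) := fun x hx =>
    (cauchySeq_apply_of_wsNorm hp0.ne' (hΛpos 0) hdiff hcauchy hx).tendsto_limUnder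
  have hconv : ∀ ε > 0, ∃ N, ∀ n ≥ N,
      MemWS p Λ (fun x => f n x - g x) ∧ wsNorm p Λ (fun x => f n x - g x) ≤ ε := by
    intro ε hε
    obtain ⟨N, hN⟩ := hcauchy ε hε
    refine ⟨N, fun n hn => wsNorm_le_of_tendsto (F := fun m x => f n x - f m x) hp0.le
      (fun x hx => tendsto_const_nhds.sub (hfg x hx)) ?_⟩
    filter_upwards [eventually_ge_atTop N] with m hm using ⟨hdiff n m, (hN n m hn hm).le⟩
  refine ⟨g, ?_, fun ε hε => ?_⟩
  · obtain ⟨N, hN⟩ := hconv 1 one_pos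
    simpa only [sub_sub_cancel] using (hf N).sub hp hΛpos (hN N le_rfl).1
  · obtain ⟨N, hN⟩ := hconv (ε / 2) (half_pos hε)
    exact ⟨N, fun n hn => (hN n hn).2.trans_lt (half_lt_self hε)⟩

/-- completeness of `ΛBV^{(p)}` with the norm `‖f‖ = |f(0)| + V(f)`:
every Cauchy sequence in `ΛBV^{(p)}` converges in this norm to a function of the class. -/
theorem stmt15 (p : ℝ) (hp : 1 ≤ p)
    (Λ : ℕ → ℝ) (hΛpos : ∀ i, 0 < Λ i) (hΛmono : Monotone Λ)
    (hΛdiv : Filter.Tendsto (fun n => ∑ i ∈ Finset.range n, 1 / Λ i) Filter.atTop Filter.atTop)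
    (f : ℕ → ℝ → ℝ) (hf : ∀ n, MemWS p Λ (f n))
    (hcauchy : ∀ ε : ℝ, 0 < ε → ∃ N : ℕ, ∀ m n : ℕ, N ≤ m → N ≤ n →
      |f m 0 - f n 0| + pVar p Λ (fun x => f m x - f n x) < ε) :
    ∃ g : ℝ → ℝ, MemWS p Λ g ∧
      ∀ ε : ℝ, 0 < ε → ∃ N : ℕ, ∀ n : ℕ, N ≤ n →
        |f n 0 - g 0| + pVar p Λ (fun x => f n x - g x) < ε :=
  stmt15_general p hp Λ hΛpos f hf hcauchy
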